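/- Let γ > 1. Suppose real numbers V₀, C₀, V₁, C₁ satisfy the Rankine–Hugoniot relations 1+V₁ = ((γ-1)/(γ+1))(1+V₀) + 2C₀²/((γ+1)(1+V₀)) and C₁² = C₀² + ((γ-1)/2)[(1+V₀)² - (1+V₁)²], with 1+V₀ ≠ 0. If C₁ = -(1+V₁), then V₀ = V₁. -/

import Mathlib

/-!
Write `a = 1 + V₀`, `b = 1 + V₁`. Clearing denominators, the first relation reads
`(γ + 1) a b = (γ - 1) a² + 2 C₀²`, and on `C₁ = -b` the second reads
`(γ + 1) b² = (γ - 1) a² + 2 C₀²`. Hence `(γ + 1) b (b - a) = 0`; and `b = 0` is impossible,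
since then `(γ - 1) a² + 2 C₀² = 0` with `γ > 1`, `a ≠ 0`.
-/

lemma hugoniot_mul_form {γ a b C : ℝ} (hγ : γ + 1 ≠ 0) (ha : a ≠ 0)
    (h : b = (γ - 1) / (γ + 1) * a + 2 * C ^ 2 / ((γ + 1) * a)) :
    (γ + 1) * a * b = (γ - 1) * a ^ 2 + 2 * C ^ 2 := by
  rw [h]
  field_simp

lemma eq_of_hugoniot_of_sonic {γ a b C : ℝ} (hγ : 1 < γ) (ha : a ≠ 0)
    (h₁ : (γ + 1) * a * b = (γ - 1) * a ^ 2 + 2 * C ^ 2)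
    (h₂ : b ^ 2 = C ^ 2 + (γ - 1) / 2 * (a ^ 2 - b ^ 2)) :
    a = b := by
  have hfactor : (γ + 1) * b * (b - a) = 0 := by linear_combination h₂ * 2 - h₁
  have hb : b ≠ 0 := by
    rintro rfl
    have ha2 : 0 < a ^ 2 := by positivity
    nlinarith [sq_nonneg C]
  have hγb : (γ + 1) * b ≠ 0 := mul_ne_zero (by linarith) hb
  exact (sub_eq_zero.mp ((mul_eq_zero.mp hfactor).resolve_left hγb)).symm

theorem stmt_11 (γ V₀ C₀ V₁ C₁ : ℝ) (hγ : 1 < γ) (h0 : 1 + V₀ ≠ 0)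
    (rh1 : 1 + V₁ = ((γ - 1) / (γ + 1)) * (1 + V₀) + 2 * C₀ ^ 2 / ((γ + 1) * (1 + V₀)))
    (rh2 : C₁ ^ 2 = C₀ ^ 2 + ((γ - 1) / 2) * ((1 + V₀) ^ 2 - (1 + V₁) ^ 2))
    (hc : C₁ = -(1 + V₁)) :
    V₀ = V₁ := by
  have h₁ := hugoniot_mul_form (by linarith) h0 rh1
  rw [hc, neg_sq] at rh2
  linarith [eq_of_hugoniot_of_sonic hγ h0 h₁ rh2]
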